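/- Let ρ: [0,∞) → ℝ be C¹ and suppose there exist constants κ > 0, q > 0, k₀ ≥ 0 such that κ⁻¹(Q+k₀)^q ≤ ρ(Q) + 2Qρ'(Q) ≤ κ(Q+k₀)^q for all Q ≥ 0. Then there exists a possibly larger constant κ₅ ≥ κ such that κ₅⁻¹(Q+k₀)^q ≤ ρ(Q) ≤ κ₅(Q+k₀)^q for all Q ≥ 0, provided ρ(0) ≤ κ₅ k₀^q when k₀ > 0 (in the case k₀ = 0, assume ρ(0) = 0). -/

import Mathlib

/-!
Substitute `Q = s ^ 2`: the function `s ↦ s * ρ (s ^ 2)` vanishes at `0` and has derivative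
`ρ Q + 2 Q ρ' Q`, which the hypothesis pins between multiples of `(s ^ 2 + k₀) ^ q`. The comparison
function `s ↦ s * (s ^ 2 + k₀) ^ q` also vanishes at `0`, and its derivative lies between
`(s ^ 2 + k₀) ^ q` and `(1 + 2q) (s ^ 2 + k₀) ^ q`. Comparing derivatives on `[0, ∞)` and dividing
by `s` gives the two bounds on `ρ`, with `κ₅ = κ (1 + 2q)`.
-/

open Set

lemma le_of_hasDerivAt_le_on_Ici {f g f' g' : ℝ → ℝ} {a x : ℝ}
    (hf : ContinuousOn f (Ici a)) (hg : ContinuousOn g (Ici a)) (ha : f a ≤ g a)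
    (hf' : ∀ y, a < y → HasDerivAt f (f' y) y) (hg' : ∀ y, a < y → HasDerivAt g (g' y) y)
    (hle : ∀ y, a < y → f' y ≤ g' y) (hx : a ≤ x) : f x ≤ g x := by
  have hmono : MonotoneOn (g - f) (Ici a) := by
    refine monotoneOn_of_hasDerivWithinAt_nonneg (f' := g' - f') (convex_Ici a) (hg.sub hf)
      (fun y hy => ?_) (fun y hy => ?_) <;> rw [interior_Ici] at hy
    · exact ((hg' y hy).sub (hf' y hy)).hasDerivWithinAt
    · exact sub_nonneg.2 (hle y hy)
  linarith [hmono self_mem_Ici hx hx, show (g - f) a = g a - f a from rfl,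
    show (g - f) x = g x - f x from rfl]

lemma mul_rpow_sub_one_le {x y : ℝ} (q : ℝ) (hxy : x ≤ y) (hy : 0 < y) :
    x * y ^ (q - 1) ≤ y ^ q :=
  calc x * y ^ (q - 1) ≤ y * y ^ (q - 1) :=
        mul_le_mul_of_nonneg_right hxy (Real.rpow_nonneg hy.le _)
    _ = y ^ q := by rw [Real.rpow_sub_one hy.ne', mul_div_cancel₀ _ hy.ne']

lemma hasDerivAt_mul_comp_sq {ρ : ℝ → ℝ} {s : ℝ} (hρ : DifferentiableAt ℝ ρ (s ^ 2)) :
    HasDerivAt (fun s => s * ρ (s ^ 2)) (ρ (s ^ 2) + 2 * s ^ 2 * deriv ρ (s ^ 2)) s := by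
  have hcomp : HasDerivAt (fun s => ρ (s ^ 2)) _ s :=
    HasDerivAt.comp (h := fun s => s ^ 2) s hρ.hasDerivAt (hasDerivAt_pow 2 s)
  exact ((hasDerivAt_id' s).mul hcomp).congr_deriv (by push_cast; ring)

lemma hasDerivAt_mul_rpow_sq_add {k q s : ℝ} (hs : 0 < s ^ 2 + k) :
    HasDerivAt (fun s => s * (s ^ 2 + k) ^ q)
      ((s ^ 2 + k) ^ q + 2 * q * (s ^ 2 * (s ^ 2 + k) ^ (q - 1))) s := by
  have hbase := ((hasDerivAt_pow 2 s).add_const k).rpow_const (p := q) (.inl hs.ne')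
  exact ((hasDerivAt_id' s).mul hbase).congr_deriv (by push_cast; ring)

lemma continuous_mul_rpow_sq_add (k : ℝ) {q : ℝ} (hq : 0 ≤ q) :
    Continuous (fun s : ℝ => s * (s ^ 2 + k) ^ q) := by
  have := Real.continuous_rpow_const hq
  fun_prop

section

variable {ρ : ℝ → ℝ} {c k q : ℝ}

lemma mul_comp_sq_le_of_add_two_mul_deriv_le (hρ : Differentiable ℝ ρ) (hc : 0 ≤ c)
    (hk : 0 ≤ k) (hq : 0 ≤ q) (h : ∀ Q, 0 ≤ Q → ρ Q + 2 * Q * deriv ρ Q ≤ c * (Q + k) ^ q)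
    {s : ℝ} (hs : 0 ≤ s) : s * ρ (s ^ 2) ≤ c * (s * (s ^ 2 + k) ^ q) := by
  refine le_of_hasDerivAt_le_on_Ici (f := fun s => s * ρ (s ^ 2))
    (g := fun s => c * (s * (s ^ 2 + k) ^ q))
    (by have := hρ.continuous; fun_prop)
    (continuous_const.mul (continuous_mul_rpow_sq_add k hq)).continuousOn (by simp)
    (fun y _ => hasDerivAt_mul_comp_sq (hρ _))
    (fun y hy => (hasDerivAt_mul_rpow_sq_add (by positivity)).const_mul c) (fun y hy => ?_) hs
  have hnonneg : 0 ≤ 2 * q * (y ^ 2 * (y ^ 2 + k) ^ (q - 1)) := by positivity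
  nlinarith [h (y ^ 2) (by positivity)]

lemma div_mul_mul_comp_sq_le_of_le_add_two_mul_deriv (hρ : Differentiable ℝ ρ) (hc : 0 ≤ c)
    (hk : 0 ≤ k) (hq : 0 ≤ q) (h : ∀ Q, 0 ≤ Q → c * (Q + k) ^ q ≤ ρ Q + 2 * Q * deriv ρ Q)
    {s : ℝ} (hs : 0 ≤ s) : c / (1 + 2 * q) * (s * (s ^ 2 + k) ^ q) ≤ s * ρ (s ^ 2) := by
  refine le_of_hasDerivAt_le_on_Ici (g := fun s => s * ρ (s ^ 2))
    (f := fun s => c / (1 + 2 * q) * (s * (s ^ 2 + k) ^ q))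
    (continuous_const.mul (continuous_mul_rpow_sq_add k hq)).continuousOn
    (by have := hρ.continuous; fun_prop) (by simp)
    (fun y hy => (hasDerivAt_mul_rpow_sq_add (by positivity)).const_mul _)
    (fun y _ => hasDerivAt_mul_comp_sq (hρ _)) (fun y hy => ?_) hs
  have hbase : 0 < y ^ 2 + k := by positivity
  have hsq := mul_rpow_sub_one_le q (le_add_of_nonneg_right hk) hbase
  calc c / (1 + 2 * q) * ((y ^ 2 + k) ^ q + 2 * q * (y ^ 2 * (y ^ 2 + k) ^ (q - 1)))
      ≤ c / (1 + 2 * q) * ((1 + 2 * q) * (y ^ 2 + k) ^ q) := by gcongr; nlinarith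
    _ = c * (y ^ 2 + k) ^ q := by field_simp
    _ ≤ _ := h (y ^ 2) (by positivity)

lemma le_mul_rpow_of_add_two_mul_deriv_le (hρ : Differentiable ℝ ρ) (hc : 0 ≤ c)
    (hk : 0 ≤ k) (hq : 0 ≤ q) (h : ∀ Q, 0 ≤ Q → ρ Q + 2 * Q * deriv ρ Q ≤ c * (Q + k) ^ q)
    {Q : ℝ} (hQ : 0 ≤ Q) : ρ Q ≤ c * (Q + k) ^ q := by
  obtain rfl | hQ := hQ.eq_or_lt
  · simpa using h 0 le_rfl
  have hs : 0 < √Q := Real.sqrt_pos.2 hQ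
  have := mul_comp_sq_le_of_add_two_mul_deriv_le hρ hc hk hq h hs.le
  rw [Real.sq_sqrt hQ.le, mul_left_comm] at this
  exact le_of_mul_le_mul_left this hs

lemma div_mul_rpow_le_of_le_add_two_mul_deriv (hρ : Differentiable ℝ ρ) (hc : 0 ≤ c)
    (hk : 0 ≤ k) (hq : 0 ≤ q) (h : ∀ Q, 0 ≤ Q → c * (Q + k) ^ q ≤ ρ Q + 2 * Q * deriv ρ Q)
    {Q : ℝ} (hQ : 0 ≤ Q) : c / (1 + 2 * q) * (Q + k) ^ q ≤ ρ Q := by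
  obtain rfl | hQ := hQ.eq_or_lt
  · have h0 := h 0 le_rfl
    simp only [zero_add, mul_zero, zero_mul, add_zero] at h0 ⊢
    calc c / (1 + 2 * q) * k ^ q ≤ c * k ^ q := by
          gcongr
          exact div_le_self hc (by linarith)
      _ ≤ ρ 0 := h0
  have hs : 0 < √Q := Real.sqrt_pos.2 hQ
  have := div_mul_mul_comp_sq_le_of_le_add_two_mul_deriv hρ hc hk hq h hs.le
  rw [Real.sq_sqrt hQ.le, mul_left_comm] at this
  exact le_of_mul_le_mul_left this hs

end

theorem stmt_5_general (ρ : ℝ → ℝ) (hC1 : ContDiff ℝ 1 ρ)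
    (κ q k₀ : ℝ) (hκ : 0 < κ) (hq : 0 < q) (hk₀ : 0 ≤ k₀)
    (hcond : ∀ Q : ℝ, 0 ≤ Q →
      κ⁻¹ * (Q + k₀) ^ q ≤ ρ Q + 2 * Q * deriv ρ Q ∧
      ρ Q + 2 * Q * deriv ρ Q ≤ κ * (Q + k₀) ^ q) :
    ∃ κ₅ : ℝ, κ ≤ κ₅ ∧ (0 < k₀ → ρ 0 ≤ κ₅ * k₀ ^ q) ∧
      ∀ Q : ℝ, 0 ≤ Q → κ₅⁻¹ * (Q + k₀) ^ q ≤ ρ Q ∧ ρ Q ≤ κ₅ * (Q + k₀) ^ q := by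
  have hρ : Differentiable ℝ ρ := hC1.differentiable one_ne_zero
  have hupper {Q : ℝ} (hQ : 0 ≤ Q) : ρ Q ≤ κ * (Q + k₀) ^ q :=
    le_mul_rpow_of_add_two_mul_deriv_le hρ hκ.le hk₀ hq.le (fun Q hQ => (hcond Q hQ).2) hQ
  have hlower {Q : ℝ} (hQ : 0 ≤ Q) : κ⁻¹ / (1 + 2 * q) * (Q + k₀) ^ q ≤ ρ Q :=
    div_mul_rpow_le_of_le_add_two_mul_deriv hρ (inv_nonneg.2 hκ.le) hk₀ hq.le
      (fun Q hQ => (hcond Q hQ).1) hQ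
  have hκκ₅ : κ ≤ κ * (1 + 2 * q) := le_mul_of_one_le_right hκ.le (by linarith)
  have hweaken {Q : ℝ} (hQ : 0 ≤ Q) : κ * (Q + k₀) ^ q ≤ κ * (1 + 2 * q) * (Q + k₀) ^ q := by
    gcongr
  refine ⟨κ * (1 + 2 * q), hκκ₅, fun _ => ?_, fun Q hQ => ⟨?_, (hupper hQ).trans (hweaken hQ)⟩⟩
  · simpa using (hupper le_rfl).trans (hweaken le_rfl)
  · rw [mul_inv, ← div_eq_mul_inv]
    exact hlower hQ

/-- Condition (26) implies condition (27): if
`κ⁻¹(Q+k₀)^q ≤ ρ(Q) + 2Qρ'(Q) ≤ κ(Q+k₀)^q` for all `Q ≥ 0`, then (assuming `ρ(0) = 0`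
in the case `k₀ = 0`) there is a possibly larger constant `κ₅ ≥ κ` with
`κ₅⁻¹(Q+k₀)^q ≤ ρ(Q) ≤ κ₅(Q+k₀)^q` for all `Q ≥ 0`. -/
theorem stmt_5 (ρ : ℝ → ℝ) (hC1 : ContDiff ℝ 1 ρ)
    (κ q k₀ : ℝ) (hκ : 0 < κ) (hq : 0 < q) (hk₀ : 0 ≤ k₀)
    (hcond : ∀ Q : ℝ, 0 ≤ Q →
      κ⁻¹ * (Q + k₀) ^ q ≤ ρ Q + 2 * Q * deriv ρ Q ∧
      ρ Q + 2 * Q * deriv ρ Q ≤ κ * (Q + k₀) ^ q)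
    (hcav : k₀ = 0 → ρ 0 = 0) :
    ∃ κ₅ : ℝ, κ ≤ κ₅ ∧ (0 < k₀ → ρ 0 ≤ κ₅ * k₀ ^ q) ∧
      ∀ Q : ℝ, 0 ≤ Q → κ₅⁻¹ * (Q + k₀) ^ q ≤ ρ Q ∧ ρ Q ≤ κ₅ * (Q + k₀) ^ q :=
  stmt_5_general ρ hC1 κ q k₀ hκ hq hk₀ hcond
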